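/- Consider the approximate modal evaluation in structures A = ((I,J), W). Suppose A' = ((I',J'), W') is more precise than A, meaning I ⊆ I', J' ⊆ J, and every pair in W' is a refinement of some pair in W (i.e., for each (I'₁,J'₁) ∈ W' there is (I₁,J₁) ∈ W with I₁ ⊆ I'₁ and J'₁ ⊆ J₁), with possibly some pairs of W having no refinement in W'. Then for any FO(K) formula φ in which every modal literal occurs positively (under an even number of negations): if A ⊨ φ then A' ⊨ φ. -/

import Mathlib

/-- Propositional formulas over a set of atoms `α`, built with ¬, ∧, ∨. -/
inductive PForm (α : Type) : Type
  | atom : α → PForm α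
  | neg  : PForm α → PForm α
  | conj : PForm α → PForm α → PForm α
  | disj : PForm α → PForm α → PForm α

/-- Classical satisfaction `I ⊨ φ`; an interpretation is a set of true atoms. -/
def PForm.sat {α : Type} (I : Set α) : PForm α → Prop
  | .atom p => p ∈ I
  | .neg ψ => ¬ PForm.sat I ψ
  | .conj a b => PForm.sat I a ∧ PForm.sat I b
  | .disj a b => PForm.sat I a ∨ PForm.sat I b

/-- Pair evaluation `(I,J) ⊨ φ`: atoms in `I`, the pair is swapped at negations. -/
def PForm.psat {α : Type} : Set α → Set α → PForm α → Prop
  | I, _, .atom p => p ∈ I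
  | I, J, .neg ψ => ¬ PForm.psat J I ψ
  | I, J, .conj a b => PForm.psat I J a ∧ PForm.psat I J b
  | I, J, .disj a b => PForm.psat I J a ∨ PForm.psat I J b

/-- FO(K)-style formulas without nesting of K: propositional formulas extended
    with modal literals `K ψ` where ψ is modal-free. -/
inductive MForm (α : Type) : Type
  | atom : α → MForm α
  | K    : PForm α → MForm α
  | neg  : MForm α → MForm α
  | conj : MForm α → MForm α → MForm α
  | disj : MForm α → MForm α → MForm α

/-- Satisfaction in a knowledge structure (I, W): atoms in I, `K ψ` holds iff
    ψ holds classically in every world of W. -/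
def MForm.msat {α : Type} (I : Set α) (W : Set (Set α)) : MForm α → Prop
  | .atom p => p ∈ I
  | .K ψ => ∀ J ∈ W, PForm.sat J ψ
  | .neg φ => ¬ MForm.msat I W φ
  | .conj a b => MForm.msat I W a ∧ MForm.msat I W b
  | .disj a b => MForm.msat I W a ∨ MForm.msat I W b

/-- Reverse an approximating pair. -/
def prRev {α : Type} (pr : Set α × Set α) : Set α × Set α := (pr.2, pr.1)

/-- Approximate modal evaluation in an approximate knowledge structure
    ((I,J), W): atoms in I; `K ψ` holds iff ψ holds at every pair of W;
    negation swaps the outer pair and reverses every pair of W. -/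
def MForm.asat {α : Type} : Set α × Set α → Set (Set α × Set α) → MForm α → Prop
  | pr, _, .atom p => p ∈ pr.1
  | _, W, .K ψ => ∀ pr' ∈ W, PForm.psat pr'.1 pr'.2 ψ
  | pr, W, .neg φ => ¬ MForm.asat (pr.2, pr.1) (prRev '' W) φ
  | pr, W, .conj a b => MForm.asat pr W a ∧ MForm.asat pr W b
  | pr, W, .disj a b => MForm.asat pr W a ∨ MForm.asat pr W b

/-- Embedding of modal-free formulas into FO(K) formulas. -/
def PForm.toM {α : Type} : PForm α → MForm α
  | .atom p => MForm.atom p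
  | .neg φ => MForm.neg (PForm.toM φ)
  | .conj a b => MForm.conj (PForm.toM a) (PForm.toM b)
  | .disj a b => MForm.disj (PForm.toM a) (PForm.toM b)

mutual
/-- All modal literals of φ occur under an even number of negations. -/
def MForm.posK {α : Type} : MForm α → Prop
  | .atom _ => True
  | .K _ => True
  | .neg φ => MForm.negK φ
  | .conj a b => MForm.posK a ∧ MForm.posK b
  | .disj a b => MForm.posK a ∧ MForm.posK b

/-- All modal literals of φ occur under an odd number of negations. -/
def MForm.negK {α : Type} : MForm α → Prop
  | .atom _ => True
  | .K _ => False
  | .neg φ => MForm.posK φ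
  | .conj a b => MForm.negK a ∧ MForm.negK b
  | .disj a b => MForm.negK a ∧ MForm.negK b
end


/-! Negation swaps every approximating pair, which reverses the precision order. Hence under a
negation the condition that each pair of `W'` refines some pair of `W` (the Smyth preorder)
becomes the condition that each pair of the old set is refined by some pair of the new one
(the Hoare preorder), and vice versa. So one proves, by simultaneous induction on `φ`,
monotonicity for positive modal literals under the Smyth preorder together with monotonicity
for negative modal literals under the Hoare preorder; at a modal literal `K ψ` it reduces to
monotonicity of pair evaluation of `ψ`. -/

section

variable {α : Type}

theorem PForm.psat_mono : ∀ {φ : PForm α} {I I' J J' : Set α},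
    I ⊆ I' → J' ⊆ J → PForm.psat I J φ → PForm.psat I' J' φ
  | .atom _, _, _, _, _, hI, _, h => hI h
  | .neg _, _, _, _, _, hI, hJ, h => fun h' => h (PForm.psat_mono hJ hI h')
  | .conj _ _, _, _, _, _, hI, hJ, h => ⟨PForm.psat_mono hI hJ h.1, PForm.psat_mono hI hJ h.2⟩
  | .disj _ _, _, _, _, _, hI, hJ, h => h.imp (PForm.psat_mono hI hJ) (PForm.psat_mono hI hJ)

def PrecLE (pr pr' : Set α × Set α) : Prop := pr.1 ⊆ pr'.1 ∧ pr'.2 ⊆ pr.2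

def SmythLE (W W' : Set (Set α × Set α)) : Prop := ∀ pr' ∈ W', ∃ pr ∈ W, PrecLE pr pr'

def HoareLE (W W' : Set (Set α × Set α)) : Prop := ∀ pr ∈ W, ∃ pr' ∈ W', PrecLE pr pr'

theorem precLE_prRev_iff {pr pr' : Set α × Set α} :
    PrecLE (prRev pr) (prRev pr') ↔ PrecLE pr' pr :=
  and_comm

theorem SmythLE.hoareLE_image_prRev {W W' : Set (Set α × Set α)} (h : SmythLE W W') :
    HoareLE (prRev '' W') (prRev '' W) := by
  rintro _ ⟨pr', hpr', rfl⟩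
  obtain ⟨pr, hpr, hle⟩ := h pr' hpr'
  exact ⟨prRev pr, Set.mem_image_of_mem prRev hpr, precLE_prRev_iff.2 hle⟩

theorem HoareLE.smythLE_image_prRev {W W' : Set (Set α × Set α)} (h : HoareLE W W') :
    SmythLE (prRev '' W') (prRev '' W) := by
  rintro _ ⟨pr, hpr, rfl⟩
  obtain ⟨pr', hpr', hle⟩ := h pr hpr
  exact ⟨prRev pr', Set.mem_image_of_mem prRev hpr', precLE_prRev_iff.2 hle⟩

mutual

theorem MForm.asat_mono_of_posK : ∀ {φ : MForm α}, φ.posK →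
    ∀ {pr pr' : Set α × Set α} {W W' : Set (Set α × Set α)},
    PrecLE pr pr' → SmythLE W W' → MForm.asat pr W φ → MForm.asat pr' W' φ
  | .atom _, _, _, _, _, _, hpr, _, h => hpr.1 h
  | .K _, _, _, _, _, _, _, hW, h => fun q hq =>
      let ⟨p, hp, hle⟩ := hW q hq
      PForm.psat_mono hle.1 hle.2 (h p hp)
  | .neg _, hφ, _, _, _, _, hpr, hW, h => fun h' =>
      h (MForm.asat_mono_of_negK hφ (precLE_prRev_iff.2 hpr) hW.hoareLE_image_prRev h')
  | .conj _ _, ⟨ha, hb⟩, _, _, _, _, hpr, hW, h =>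
      ⟨MForm.asat_mono_of_posK ha hpr hW h.1, MForm.asat_mono_of_posK hb hpr hW h.2⟩
  | .disj _ _, ⟨ha, hb⟩, _, _, _, _, hpr, hW, h =>
      h.imp (MForm.asat_mono_of_posK ha hpr hW) (MForm.asat_mono_of_posK hb hpr hW)

theorem MForm.asat_mono_of_negK : ∀ {φ : MForm α}, φ.negK →
    ∀ {pr pr' : Set α × Set α} {W W' : Set (Set α × Set α)},
    PrecLE pr pr' → HoareLE W W' → MForm.asat pr W φ → MForm.asat pr' W' φ
  | .atom _, _, _, _, _, _, hpr, _, h => hpr.1 h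
  | .K _, hφ, _, _, _, _, _, _, _ => hφ.elim
  | .neg _, hφ, _, _, _, _, hpr, hW, h => fun h' =>
      h (MForm.asat_mono_of_posK hφ (precLE_prRev_iff.2 hpr) hW.smythLE_image_prRev h')
  | .conj _ _, ⟨ha, hb⟩, _, _, _, _, hpr, hW, h =>
      ⟨MForm.asat_mono_of_negK ha hpr hW h.1, MForm.asat_mono_of_negK hb hpr hW h.2⟩
  | .disj _ _, ⟨ha, hb⟩, _, _, _, _, hpr, hW, h =>
      h.imp (MForm.asat_mono_of_negK ha hpr hW) (MForm.asat_mono_of_negK hb hpr hW)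

end

end

/-- Approximate modal evaluation of formulas whose modal literals all occur
    positively is monotone under refinement of the approximate knowledge
    structure. -/
theorem asat_mono_refine_of_posK {α : Type} [Fintype α]
    (φ : MForm α) (hpos : MForm.posK φ)
    (I I' J J' : Set α) (W W' : Set (Set α × Set α))
    (hI : I ⊆ I') (hJ : J' ⊆ J)
    (hW : ∀ pr' ∈ W', ∃ pr ∈ W, pr.1 ⊆ pr'.1 ∧ pr'.2 ⊆ pr.2)
    (h : MForm.asat (I, J) W φ) :
    MForm.asat (I', J') W' φ :=
  MForm.asat_mono_of_posK hpos ⟨hI, hJ⟩ hW h
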